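/- Expansion rules for the robust always and eventually operators: for every rLTL(□·,◇·) formula φ, every infinite word σ over Σ = 2^𝒫, and every ℓ ∈ ℕ, the following equalities hold: V₁(σ|ℓ,□·φ) = min{V₁(σ|ℓ,φ), V₁(σ|ℓ+1,□·φ)}; V₂(σ|ℓ,□·φ) = max{V₁(σ|ℓ,□·φ), V₂(σ|ℓ+1,□·φ)}; V₃(σ|ℓ,□·φ) = min{V₄(σ|ℓ,□·φ), V₃(σ|ℓ+1,□·φ)}; V₄(σ|ℓ,□·φ) = max{V₄(σ|ℓ,φ), V₄(σ|ℓ+1,□·φ)}; and V_k(σ|ℓ,◇·φ) = max{V_k(σ|ℓ,φ), V_k(σ|ℓ+1,◇·φ)} for each k ∈ {1,2,3,4}. -/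
import Mathlib


/-- Truth values as 4-tuples of Booleans. -/
abbrev TV := Bool × Bool × Bool × Bool

def ttop : TV := (true, true, true, true)
def tbot : TV := (false, false, false, false)

/-- Componentwise order on 4-tuples. -/
def tle (a b : TV) : Prop :=
  a.1 ≤ b.1 ∧ a.2.1 ≤ b.2.1 ∧ a.2.2.1 ≤ b.2.2.1 ∧ a.2.2.2 ≤ b.2.2.2

instance : DecidableRel tle := fun a b =>
  decidable_of_iff (a.1 ≤ b.1 ∧ a.2.1 ≤ b.2.1 ∧ a.2.2.1 ≤ b.2.2.1 ∧ a.2.2.2 ≤ b.2.2.2) Iff.rfl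

def tmeet (a b : TV) : TV :=
  (a.1 && b.1, a.2.1 && b.2.1, a.2.2.1 && b.2.2.1, a.2.2.2 && b.2.2.2)

def tjoin (a b : TV) : TV :=
  (a.1 || b.1, a.2.1 || b.2.1, a.2.2.1 || b.2.2.1, a.2.2.2 || b.2.2.2)

/-- da Costa negation. -/
def tneg (a : TV) : TV := if a = ttop then tbot else ttop

/-- Residual implication. -/
def timp (a b : TV) : TV := if tle a b then ttop else b

/-- Infimum of a Boolean sequence. -/
noncomputable def bInf (f : ℕ → Bool) : Bool :=
  @decide (∀ i, f i = true) (Classical.propDecidable _)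

/-- Supremum of a Boolean sequence. -/
noncomputable def bSup (f : ℕ → Bool) : Bool :=
  @decide (∃ i, f i = true) (Classical.propDecidable _)

/-- Bounded infimum over `i < n`. -/
noncomputable def bInfLt (n : ℕ) (f : ℕ → Bool) : Bool :=
  @decide (∀ i, i < n → f i = true) (Classical.propDecidable _)

/-- Bounded supremum over `i < n`. -/
noncomputable def bSupLt (n : ℕ) (f : ℕ → Bool) : Bool :=
  @decide (∃ i, i < n ∧ f i = true) (Classical.propDecidable _)

/-- Suffix of an infinite word. -/
def suffix {P : Type} (σ : ℕ → Set P) (i : ℕ) : ℕ → Set P := fun j => σ (i + j)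

/-- rLTL(□,◇) formulas. -/
inductive RFormula (P : Type) : Type where
  | atom : P → RFormula P
  | not : RFormula P → RFormula P
  | and : RFormula P → RFormula P → RFormula P
  | or : RFormula P → RFormula P → RFormula P
  | imp : RFormula P → RFormula P → RFormula P
  | always : RFormula P → RFormula P
  | eventually : RFormula P → RFormula P
  deriving DecidableEq

open scoped Classical in
/-- The 5-valued rLTL semantics. -/
noncomputable def rV {P : Type} : RFormula P → (ℕ → Set P) → TV
  | .atom p, σ => if p ∈ σ 0 then ttop else tbot
  | .not φ, σ => tneg (rV φ σ)
  | .and φ ψ, σ => tmeet (rV φ σ) (rV ψ σ)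
  | .or φ ψ, σ => tjoin (rV φ σ) (rV ψ σ)
  | .imp φ ψ, σ => timp (rV φ σ) (rV ψ σ)
  | .always φ, σ =>
      (bInf fun i => (rV φ (suffix σ i)).1,
       bSup fun j => bInf fun i => (rV φ (suffix σ (j + i))).2.1,
       bInf fun j => bSup fun i => (rV φ (suffix σ (j + i))).2.2.1,
       bSup fun i => (rV φ (suffix σ i)).2.2.2)
  | .eventually φ, σ =>
      (bSup fun i => (rV φ (suffix σ i)).1,
       bSup fun i => (rV φ (suffix σ i)).2.1,
       bSup fun i => (rV φ (suffix σ i)).2.2.1,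
       bSup fun i => (rV φ (suffix σ i)).2.2.2)

/-- Projection onto the k-th component. -/
def comp : Fin 4 → TV → Bool
  | 0, a => a.1
  | 1, a => a.2.1
  | 2, a => a.2.2.1
  | 3, a => a.2.2.2


/-! ### Auxiliary lemmas -/

lemma bool_eq_of_iff {a b : Bool} (h : (a = true) ↔ (b = true)) : a = b := by
  cases a <;> cases b <;> simp_all

lemma min_true_iff (a b : Bool) : min a b = true ↔ (a = true ∧ b = true) := by
  cases a <;> cases b <;> simp

lemma max_true_iff (a b : Bool) : max a b = true ↔ (a = true ∨ b = true) := by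
  cases a <;> cases b <;> simp

lemma bInf_iff (f : ℕ → Bool) : bInf f = true ↔ ∀ i, f i = true := by
  simp [bInf]

lemma bSup_iff (f : ℕ → Bool) : bSup f = true ↔ ∃ i, f i = true := by
  simp [bSup]

lemma suffix_suffix {P : Type} (σ : ℕ → Set P) (a b : ℕ) :
    suffix (suffix σ a) b = suffix σ (a + b) := by
  funext j; simp [suffix, Nat.add_assoc]

lemma L1 (f : ℕ → Bool) : bInf f = min (f 0) (bInf fun i => f (1 + i)) := by
  apply bool_eq_of_iff
  rw [min_true_iff, bInf_iff, bInf_iff]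
  constructor
  · exact fun h => ⟨h 0, fun i => h (1 + i)⟩
  · rintro ⟨h0, hs⟩ i
    cases i with
    | zero => exact h0
    | succ n => simpa [Nat.add_comm] using hs n

lemma L4 (f : ℕ → Bool) : bSup f = max (f 0) (bSup fun i => f (1 + i)) := by
  apply bool_eq_of_iff
  rw [max_true_iff, bSup_iff, bSup_iff]
  constructor
  · rintro ⟨i, hi⟩
    cases i with
    | zero => exact Or.inl hi
    | succ n => exact Or.inr ⟨n, by simpa [Nat.add_comm] using hi⟩
  · rintro (h | ⟨i, hi⟩)
    · exact ⟨0, h⟩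
    · exact ⟨1 + i, hi⟩

lemma L2 (f g : ℕ → Bool) (hfg : ∀ i, f i = true → g i = true) :
    bSup (fun j => bInf fun i => g (j + i))
      = max (bInf f) (bSup fun j => bInf fun i => g (1 + (j + i))) := by
  apply bool_eq_of_iff
  rw [max_true_iff, bSup_iff, bSup_iff, bInf_iff]
  simp only [bInf_iff]
  constructor
  · rintro ⟨j, h⟩
    refine Or.inr ⟨j, fun i => ?_⟩
    have e : 1 + (j + i) = j + (1 + i) := by omega
    rw [e]; exact h (1 + i)
  · rintro (h | ⟨j, h⟩)
    · exact ⟨0, fun i => hfg (0 + i) (h (0 + i))⟩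
    · refine ⟨1 + j, fun i => ?_⟩
      have e : 1 + j + i = 1 + (j + i) := by omega
      rw [e]; exact h i

lemma L3 (g h : ℕ → Bool) (hgh : ∀ i, g i = true → h i = true) :
    bInf (fun j => bSup fun i => g (j + i))
      = min (bSup h) (bInf fun j => bSup fun i => g (1 + (j + i))) := by
  apply bool_eq_of_iff
  rw [min_true_iff, bInf_iff, bInf_iff, bSup_iff]
  simp only [bSup_iff]
  constructor
  · intro H
    constructor
    · obtain ⟨i, hi⟩ := H 0
      exact ⟨0 + i, hgh (0 + i) hi⟩
    · intro j
      obtain ⟨i, hi⟩ := H (1 + j)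
      refine ⟨i, ?_⟩
      have e : 1 + (j + i) = 1 + j + i := by omega
      rw [e]; exact hi
  · rintro ⟨-, H⟩ j
    obtain ⟨i, hi⟩ := H j
    refine ⟨1 + i, ?_⟩
    have e : j + (1 + i) = 1 + (j + i) := by omega
    rw [e]; exact hi

lemma rV_mono {P : Type} (φ : RFormula P) : ∀ σ : ℕ → Set P,
    ((rV φ σ).1 = true → (rV φ σ).2.1 = true) ∧
    ((rV φ σ).2.1 = true → (rV φ σ).2.2.1 = true) ∧
    ((rV φ σ).2.2.1 = true → (rV φ σ).2.2.2 = true) := by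
  induction φ with
  | atom p =>
      intro σ; simp only [rV]; split <;> simp [ttop, tbot]
  | not φ ih =>
      intro σ; simp only [rV, tneg]; split <;> simp [ttop, tbot]
  | and φ ψ ihφ ihψ =>
      intro σ
      obtain ⟨h1, h2, h3⟩ := ihφ σ
      obtain ⟨g1, g2, g3⟩ := ihψ σ
      simp only [rV, tmeet, Bool.and_eq_true]
      exact ⟨fun ⟨a, b⟩ => ⟨h1 a, g1 b⟩, fun ⟨a, b⟩ => ⟨h2 a, g2 b⟩,
        fun ⟨a, b⟩ => ⟨h3 a, g3 b⟩⟩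
  | or φ ψ ihφ ihψ =>
      intro σ
      obtain ⟨h1, h2, h3⟩ := ihφ σ
      obtain ⟨g1, g2, g3⟩ := ihψ σ
      simp only [rV, tjoin, Bool.or_eq_true]
      exact ⟨fun h => h.elim (fun a => Or.inl (h1 a)) (fun b => Or.inr (g1 b)),
        fun h => h.elim (fun a => Or.inl (h2 a)) (fun b => Or.inr (g2 b)),
        fun h => h.elim (fun a => Or.inl (h3 a)) (fun b => Or.inr (g3 b))⟩
  | imp φ ψ ihφ ihψ =>
      intro σ
      simp only [rV, timp]
      split
      · simp [ttop]
      · exact ihψ σ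
  | always φ ih =>
      intro σ
      simp only [rV]
      refine ⟨?_, ?_, ?_⟩
      · rw [bInf_iff, bSup_iff]
        intro h
        refine ⟨0, ?_⟩
        rw [bInf_iff]
        exact fun i => (ih (suffix σ (0 + i))).1 (h (0 + i))
      · rw [bSup_iff, bInf_iff]
        rintro ⟨j, hj⟩ j'
        rw [bInf_iff] at hj
        rw [bSup_iff]
        refine ⟨j, ?_⟩
        have e : j' + j = j + j' := by omega
        rw [e]
        exact (ih _).2.1 (hj j')
      · rw [bInf_iff, bSup_iff]
        intro h
        obtain ⟨i, hi⟩ := (bSup_iff _).1 (h 0)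
        exact ⟨0 + i, (ih _).2.2 hi⟩
  | eventually φ ih =>
      intro σ
      simp only [rV]
      refine ⟨?_, ?_, ?_⟩ <;>
        · rw [bSup_iff, bSup_iff]
          rintro ⟨i, hi⟩
          refine ⟨i, ?_⟩
          first
          | exact (ih _).1 hi
          | exact (ih _).2.1 hi
          | exact (ih _).2.2 hi

/-- Expansion rules for the robust always and eventually operators:
for every rLTL(□,◇) formula `φ`, every infinite word `σ` over `Σ = 2^𝒫`, and every `ℓ ∈ ℕ`,
the stated equalities between the components of the valuation at the suffixes `σ|ℓ` and
`σ|ℓ+1` hold. -/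
theorem expansion_rules_always_eventually {P : Type} (φ : RFormula P)
    (σ : ℕ → Set P) (ℓ : ℕ) :
    ((rV (.always φ) (suffix σ ℓ)).1
        = min ((rV φ (suffix σ ℓ)).1) ((rV (.always φ) (suffix σ (ℓ + 1))).1))
    ∧ ((rV (.always φ) (suffix σ ℓ)).2.1
        = max ((rV (.always φ) (suffix σ ℓ)).1) ((rV (.always φ) (suffix σ (ℓ + 1))).2.1))
    ∧ ((rV (.always φ) (suffix σ ℓ)).2.2.1
        = min ((rV (.always φ) (suffix σ ℓ)).2.2.2) ((rV (.always φ) (suffix σ (ℓ + 1))).2.2.1))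
    ∧ ((rV (.always φ) (suffix σ ℓ)).2.2.2
        = max ((rV φ (suffix σ ℓ)).2.2.2) ((rV (.always φ) (suffix σ (ℓ + 1))).2.2.2))
    ∧ (∀ k : Fin 4, comp k (rV (.eventually φ) (suffix σ ℓ))
        = max (comp k (rV φ (suffix σ ℓ))) (comp k (rV (.eventually φ) (suffix σ (ℓ + 1))))) := by
  simp only [rV, suffix_suffix, Nat.add_assoc]
  refine ⟨?_, ?_, ?_, ?_, ?_⟩
  · exact L1 (fun m => (rV φ (suffix σ (ℓ + m))).1)
  · exact L2 (fun m => (rV φ (suffix σ (ℓ + m))).1)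
      (fun m => (rV φ (suffix σ (ℓ + m))).2.1)
      (fun i => (rV_mono φ (suffix σ (ℓ + i))).1)
  · exact L3 (fun m => (rV φ (suffix σ (ℓ + m))).2.2.1)
      (fun m => (rV φ (suffix σ (ℓ + m))).2.2.2)
      (fun i => (rV_mono φ (suffix σ (ℓ + i))).2.2)
  · exact L4 (fun m => (rV φ (suffix σ (ℓ + m))).2.2.2)
  · intro k
    fin_cases k <;> simp only [comp] <;>
      first
      | exact L4 (fun m => (rV φ (suffix σ (ℓ + m))).1)
      | exact L4 (fun m => (rV φ (suffix σ (ℓ + m))).2.1)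
      | exact L4 (fun m => (rV φ (suffix σ (ℓ + m))).2.2.1)
      | exact L4 (fun m => (rV φ (suffix σ (ℓ + m))).2.2.2)
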